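/- arXiv:2005.11430 — 5 statements merged into one kernel-verified Lean document; each statement's English description precedes it below -/
import Mathlib

section
/- Under the hypotheses of the main theorem, for A_{ii} ∈ 𝔄_{ii} and B_{ij} ∈ 𝔄_{ij} with i ≠ j, φ(A_{ii}B_{ij}) = φ(A_{ii})φ(B_{ij}). -/
/-- The *-Jordan product `{A,B}_* = AB + BA*`. -/
def jstar {R : Type*} [Ring R] [StarRing R] (A B : R) : R := A * B + B * star A

/-- The iterated *-Jordan product `q_{n*}(x_1, ..., x_n)`. -/
def qstar {R : Type*} [Ring R] [StarRing R] : List R → R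
  | [] => 0
  | x :: xs => xs.foldl jstar x

/-!
Put `Q = φ(P_i)`. Additivity and `φ(1) = 1` give `φ(P_j) = 1 - Q`, and Peirce preservation applied
to `P_i` and `P_j` themselves gives `Q³ = Q` and `(1 - Q)³ = 1 - Q`, whence `3Q² = 3Q`: so `Q` is a
projection and `φ` maps `𝔄_{ij}` into the Peirce spaces of `Q`. In any *-ring, for a projection `P`,
`A = PAP` and `B = PB(1 - P)` one has `BA* = 0`, so `q_{n*}(P, …, P, A, B) = 2^{n-2} AB`.
Applying `φ` to this identity and using the `q_{n*}`-condition for `P_i` yields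
`2^{n-2} φ(AB) = 2^{n-2} φ(A)φ(B)`, and a complex vector space has no torsion.
-/

section Ring

variable {R : Type*} [Ring R] {P A : R}

lemma IsIdempotentElem.mul_left_eq_of_mul_mul_eq {Q : R} (hP : IsIdempotentElem P)
    (hA : P * A * Q = A) : P * A = A := by
  rw [← hA, ← mul_assoc, ← mul_assoc, hP.eq]

lemma IsIdempotentElem.mul_right_eq_of_mul_mul_eq {Q : R} (hQ : IsIdempotentElem Q)
    (hA : P * A * Q = A) : A * Q = A := by
  rw [← hA, mul_assoc, hQ.eq]

lemma isIdempotentElem_of_cube_eq_self [IsAddTorsionFree R] {Q : R} (hQ : Q * Q * Q = Q)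
    (hQ' : (1 - Q) * (1 - Q) * (1 - Q) = 1 - Q) : IsIdempotentElem Q := by
  have h3 : 3 • (Q * Q) = 3 • Q := by
    have : (1 - Q) * (1 - Q) * (1 - Q) = 1 - 3 • Q + 3 • (Q * Q) - Q * Q * Q := by noncomm_ring
    rw [this, hQ] at hQ'
    rw [← sub_eq_zero, ← sub_eq_zero.mpr hQ']
    abel
  exact nsmul_right_injective (by norm_num) h3

lemma eq_one_sub_of_mem_pair {Pi Pj : R} (hPi : Pi ∈ ({P, 1 - P} : Set R))
    (hPj : Pj ∈ ({P, 1 - P} : Set R)) (hij : Pi ≠ Pj) : Pj = 1 - Pi := by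
  rcases hPi with rfl | rfl <;> rcases hPj with rfl | rfl <;> first | exact absurd rfl hij | abel

end Ring

section StarRing

variable {R : Type*} [Ring R] [StarRing R] {P A B : R}

lemma jstar_nsmul_left (c : ℕ) (A B : R) : jstar (c • A) B = c • jstar A B := by
  simp only [jstar, smul_mul_assoc, star_nsmul, mul_smul_comm, smul_add]

lemma jstar_eq_two_nsmul (hP : IsSelfAdjoint P) (hPA : P * A = A) (hAP : A * P = A) :
    jstar P A = 2 • A := by
  rw [jstar, hP.star_eq, hPA, hAP, two_nsmul]

lemma jstar_eq_mul (h : B * star A = 0) : jstar A B = A * B := by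
  rw [jstar, h, add_zero]

lemma foldl_jstar_replicate (hP : IsIdempotentElem P) (hPs : IsSelfAdjoint P) (k c : ℕ) :
    (List.replicate k P).foldl jstar (c • P) = (2 ^ k * c) • P := by
  induction k generalizing c with
  | zero => simp
  | succ k ih =>
    rw [List.replicate_succ, List.foldl_cons, jstar_nsmul_left,
      jstar_eq_two_nsmul hPs hP.eq hP.eq, smul_smul, ih, pow_succ, mul_comm c, mul_assoc]

lemma mul_star_eq_zero_of_corner (hP : IsIdempotentElem P) (hPs : IsSelfAdjoint P)
    (hA : P * A * P = A) (hB : P * B * (1 - P) = B) : B * star A = 0 := by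
  have hB' : B * (1 - P) = B := hP.one_sub.mul_right_eq_of_mul_mul_eq hB
  have hA' : P * star A = star A := by
    simpa only [star_mul, hPs.star_eq] using congrArg star (hP.mul_right_eq_of_mul_mul_eq hA)
  rw [← hB', ← hA', mul_assoc, ← mul_assoc (1 - P), sub_mul, one_mul, hP.eq, sub_self,
    zero_mul, mul_zero]

lemma qstar_replicate_append_of_corner (hP : IsIdempotentElem P) (hPs : IsSelfAdjoint P)
    (hA : P * A * P = A) (hB : P * B * (1 - P) = B) (m : ℕ) :
    qstar (List.replicate m P ++ [A, B]) = 2 ^ m • (A * B) := by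
  have hBA := mul_star_eq_zero_of_corner hP hPs hA hB
  cases m with
  | zero => simp [qstar, jstar_eq_mul hBA]
  | succ k =>
    have hPA := hP.mul_left_eq_of_mul_mul_eq hA
    have hAP := hP.mul_right_eq_of_mul_mul_eq hA
    have h := foldl_jstar_replicate hP hPs k 1
    rw [one_smul, mul_one] at h
    rw [List.replicate_succ, List.cons_append, qstar, List.foldl_append, h]
    simp only [List.foldl_cons, List.foldl_nil, jstar_nsmul_left, jstar_eq_two_nsmul hPs hPA hAP,
      jstar_eq_mul hBA, smul_smul, pow_succ]

lemma isIdempotentElem_and_isSelfAdjoint_of_mem_pair {Pi : R}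
    (hP : IsIdempotentElem P) (hPs : IsSelfAdjoint P) (hPi : Pi ∈ ({P, 1 - P} : Set R)) :
    IsIdempotentElem Pi ∧ IsSelfAdjoint Pi := by
  rcases hPi with rfl | rfl
  · exact ⟨hP, hPs⟩
  · exact ⟨hP.one_sub, (IsSelfAdjoint.one R).sub hPs⟩

end StarRing

theorem stmt13_general {𝔄 𝔄' : Type*} [CStarAlgebra 𝔄] [CStarAlgebra 𝔄']
    (n : ℕ)
    (P₁ : 𝔄) (hproj : P₁ * P₁ = P₁) (hsa : star P₁ = P₁)
    (φ : 𝔄 → 𝔄') (hunital : φ 1 = 1) (hadd : ∀ A B : 𝔄, φ (A + B) = φ A + φ B) (hstar : ∀ A : 𝔄, φ (star A) = star (φ A))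
    (hpeirce : ∀ Pi ∈ ({P₁, 1 - P₁} : Set 𝔄), ∀ Pj ∈ ({P₁, 1 - P₁} : Set 𝔄), ∀ X : 𝔄,
      Pi * X * Pj = X → φ Pi * φ X * φ Pj = φ X)
    (hqP : ∀ P ∈ ({P₁, 1 - P₁} : Set 𝔄), ∀ A B : 𝔄,
      φ (qstar (List.replicate (n - 2) P ++ [A, B])) =
      qstar (List.replicate (n - 2) (φ P) ++ [φ A, φ B])) :
    ∀ Pi ∈ ({P₁, 1 - P₁} : Set 𝔄), ∀ Pj ∈ ({P₁, 1 - P₁} : Set 𝔄), Pi ≠ Pj →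
      ∀ A B : 𝔄, Pi * A * Pi = A → Pi * B * Pj = B →
      φ (A * B) = φ A * φ B := by
  intro Pi hPi Pj hPj hij A B hA hB
  have : IsAddTorsionFree 𝔄' := .of_isTorsionFree ℂ 𝔄'
  let f : 𝔄 →+ 𝔄' := AddMonoidHom.mk' φ hadd
  obtain ⟨hPi_idem, hPi_sa⟩ := isIdempotentElem_and_isSelfAdjoint_of_mem_pair hproj hsa hPi
  obtain rfl : Pj = 1 - Pi := eq_one_sub_of_mem_pair hPi hPj hij
  have hφPj : φ (1 - Pi) = 1 - φ Pi := by rw [← hunital]; exact map_sub f 1 Pi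
  have hcube {P : 𝔄} (hP : P ∈ ({P₁, 1 - P₁} : Set 𝔄)) (hP' : IsIdempotentElem P) :
      φ P * φ P * φ P = φ P :=
    hpeirce P hP P hP P (by rw [hP'.eq, hP'.eq])
  have hQ_idem : IsIdempotentElem (φ Pi) :=
    isIdempotentElem_of_cube_eq_self (hcube hPi hPi_idem) (hφPj ▸ hcube hPj hPi_idem.one_sub)
  have hQ_sa : IsSelfAdjoint (φ Pi) := by rw [IsSelfAdjoint, ← hstar, hPi_sa.star_eq]
  have key := hqP Pi hPi A B
  rw [qstar_replicate_append_of_corner hPi_idem hPi_sa hA hB,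
    qstar_replicate_append_of_corner hQ_idem hQ_sa (hpeirce Pi hPi Pi hPi A hA)
      (hφPj ▸ hpeirce Pi hPi (1 - Pi) hPj B hB)] at key
  exact nsmul_right_injective (by positivity) ((map_nsmul f _ _).symm.trans key)

theorem stmt13 {𝔄 𝔄' : Type*} [CStarAlgebra 𝔄] [CStarAlgebra 𝔄']
    (n : ℕ) (hn : 2 ≤ n)
    (P₁ : 𝔄) (hproj : P₁ * P₁ = P₁) (hsa : star P₁ = P₁) (hne0 : P₁ ≠ 0) (hne1 : P₁ ≠ 1)
    (φ : 𝔄 → 𝔄') (hbij : Function.Bijective φ) (hunital : φ 1 = 1) (hadd : ∀ A B : 𝔄, φ (A + B) = φ A + φ B) (hstar : ∀ A : 𝔄, φ (star A) = star (φ A))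
    (hpeirce : ∀ Pi ∈ ({P₁, 1 - P₁} : Set 𝔄), ∀ Pj ∈ ({P₁, 1 - P₁} : Set 𝔄), ∀ X : 𝔄,
      Pi * X * Pj = X → φ Pi * φ X * φ Pj = φ X)
    (hqI : ∀ A B : 𝔄, φ (qstar (List.replicate (n - 2) 1 ++ [A, B])) =
      qstar (List.replicate (n - 2) (φ 1) ++ [φ A, φ B]))
    (hqP : ∀ P ∈ ({P₁, 1 - P₁} : Set 𝔄), ∀ A B : 𝔄,
      φ (qstar (List.replicate (n - 2) P ++ [A, B])) =
      qstar (List.replicate (n - 2) (φ P) ++ [φ A, φ B])) :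
    ∀ Pi ∈ ({P₁, 1 - P₁} : Set 𝔄), ∀ Pj ∈ ({P₁, 1 - P₁} : Set 𝔄), Pi ≠ Pj →
      ∀ A B : 𝔄, Pi * A * Pi = A → Pi * B * Pj = B →
      φ (A * B) = φ A * φ B :=
  stmt13_general n P₁ hproj hsa φ hunital hadd hstar hpeirce hqP
end

section
/- Under the hypotheses of the main theorem, including condition (♣) on 𝔄' (Y𝔄'φ(P_i) = {0} implies Y = 0), for A_{ii}, B_{ii} ∈ 𝔄_{ii} one has φ(A_{ii}B_{ii}) = φ(A_{ii})φ(B_{ii}). -/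
private lemma absL {R : Type*} [Ring R] {P Q X : R} (hP : P * P = P) (h : P * X * Q = X) :
    P * X = X := by
  conv_lhs => rw [← h]
  rw [← mul_assoc, ← mul_assoc, hP, h]

private lemma absR {R : Type*} [Ring R] {P Q X : R} (hQ : Q * Q = Q) (h : P * X * Q = X) :
    X * Q = X := by
  conv_lhs => rw [← h]
  rw [mul_assoc (P * X), hQ, h]

private lemma mulmem {R : Type*} [Ring R] {P Q X Y : R} (hX : P * X = X) (hY : Y * Q = Y) :
    P * (X * Y) * Q = X * Y := by
  rw [← mul_assoc P X Y, hX, mul_assoc, hY]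

private lemma sand {R : Type*} [Ring R] {P Q : R} (hP : P * P = P) (hQ : Q * Q = Q) (C : R) :
    P * (P * C * Q) * Q = P * C * Q := by
  rw [← mul_assoc, ← mul_assoc, hP, mul_assoc (P * C), hQ]

private lemma cube_idem {R : Type*} [Ring R] [Module ℂ R] (e : R)
    (h1 : e * e * e = e) (h2 : (1 - e) * (1 - e) * (1 - e) = 1 - e) : e * e = e := by
  have expand : (1 - e) * (1 - e) * (1 - e)
      = 1 - e - e - e + (e * e + e * e + e * e) - e * e * e := by noncomm_ring
  rw [expand, h1] at h2
  have key : (e * e - e) + (e * e - e) + (e * e - e) = 0 := by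
    have h4 : (e * e - e) + (e * e - e) + (e * e - e)
        = (1 - e - e - e + (e * e + e * e + e * e) - e) - (1 - e) := by abel
    rw [h4, h2, sub_self]
  have h5 : (3 : ℂ) • (e * e - e) = 0 := by
    rw [show (3 : ℂ) = 1 + 1 + 1 by norm_num, add_smul, add_smul, one_smul]
    exact key
  have h6 : e * e - e = 0 := by
    have := congrArg (fun x => (3 : ℂ)⁻¹ • x) h5
    simpa [smul_smul] using this
  exact sub_eq_zero.mp h6

theorem stmt14 {𝔄 𝔄' : Type*} [CStarAlgebra 𝔄] [CStarAlgebra 𝔄']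
    (n : ℕ) (hn : 2 ≤ n)
    (P₁ : 𝔄) (hproj : P₁ * P₁ = P₁) (hsa : star P₁ = P₁) (hne0 : P₁ ≠ 0) (hne1 : P₁ ≠ 1)
    (φ : 𝔄 → 𝔄') (hbij : Function.Bijective φ) (hunital : φ 1 = 1) (hadd : ∀ A B : 𝔄, φ (A + B) = φ A + φ B) (hstar : ∀ A : 𝔄, φ (star A) = star (φ A))
    (hpeirce : ∀ Pi ∈ ({P₁, 1 - P₁} : Set 𝔄), ∀ Pj ∈ ({P₁, 1 - P₁} : Set 𝔄), ∀ X : 𝔄,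
      Pi * X * Pj = X → φ Pi * φ X * φ Pj = φ X)
    (hqI : ∀ A B : 𝔄, φ (qstar (List.replicate (n - 2) 1 ++ [A, B])) =
      qstar (List.replicate (n - 2) (φ 1) ++ [φ A, φ B]))
    (hqP : ∀ P ∈ ({P₁, 1 - P₁} : Set 𝔄), ∀ A B : 𝔄,
      φ (qstar (List.replicate (n - 2) P ++ [A, B])) =
      qstar (List.replicate (n - 2) (φ P) ++ [φ A, φ B]))
    (hclub : ∀ P ∈ ({P₁, 1 - P₁} : Set 𝔄), ∀ Y : 𝔄', (∀ Z : 𝔄', Y * Z * φ P = 0) → Y = 0)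
    (hmul1 : ∀ Pi ∈ ({P₁, 1 - P₁} : Set 𝔄), ∀ Pj ∈ ({P₁, 1 - P₁} : Set 𝔄), Pi ≠ Pj →
      ∀ A B : 𝔄, Pi * A * Pi = A → Pi * B * Pj = B → φ (A * B) = φ A * φ B) :
    ∀ P ∈ ({P₁, 1 - P₁} : Set 𝔄), ∀ A B : 𝔄, P * A * P = A → P * B * P = B →
      φ (A * B) = φ A * φ B := by
  intro P hP A B hA hB
  -- the complementary projection Q
  have h1proj : (1 - P₁) * (1 - P₁) = 1 - P₁ := by
    have : (1 - P₁) * (1 - P₁) = 1 - P₁ - P₁ + P₁ * P₁ := by noncomm_ring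
    rw [this, hproj]; abel
  have hneP : P₁ ≠ 1 - P₁ := by
    intro h
    apply hne0
    have h2 : P₁ * P₁ = P₁ * (1 - P₁) := by rw [← h]
    rw [hproj, mul_sub, mul_one, hproj, sub_self] at h2
    exact h2
  obtain ⟨Q, hQmem, hPQ1, hPne, hPproj, hQproj⟩ :
      ∃ Q, Q ∈ ({P₁, 1 - P₁} : Set 𝔄) ∧ P + Q = 1 ∧ P ≠ Q ∧ P * P = P ∧ Q * Q = Q := by
    rcases hP with h | h
    · exact ⟨1 - P₁, Or.inr rfl, by rw [h]; abel, by rw [h]; exact hneP,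
        by rw [h]; exact hproj, h1proj⟩
    · exact ⟨P₁, Or.inl rfl, by rw [h]; abel, by rw [h]; exact fun hc => hneP hc.symm,
        by rw [h]; exact h1proj, hproj⟩
  set e := φ P with he_def
  set f := φ Q with hf_def
  -- basic facts about e and f
  have hef1 : e + f = 1 := by rw [he_def, hf_def, ← hadd, hPQ1, hunital]
  have hf : f = 1 - e := by rw [eq_sub_iff_add_eq, add_comm]; exact hef1
  have he3 : e * e * e = e := hpeirce P hP P hP P (by rw [hPproj, hPproj])
  have hf3 : f * f * f = f := hpeirce Q hQmem Q hQmem Q (by rw [hQproj, hQproj])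
  have hee : e * e = e := cube_idem e he3 (by rw [← hf]; exact hf3)
  have hef0 : e * f = 0 := by rw [hf, mul_sub, mul_one, hee, sub_self]
  have hfe0 : f * e = 0 := by rw [hf, sub_mul, one_mul, hee, sub_self]
  have hff : f * f = f := by
    have h1 : f * (e + f) = f := by rw [hef1, mul_one]
    rwa [mul_add, hfe0, zero_add] at h1
  -- corner facts for A, B
  have hAl : P * A = A := absL hPproj hA
  have hAr : A * P = A := absR hPproj hA
  have hBl : P * B = B := absL hPproj hB
  have hBr : B * P = B := absR hPproj hB
  have hABmem : P * (A * B) * P = A * B := mulmem hAl hBr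
  -- Peirce images
  have pAB : e * φ (A * B) * e = φ (A * B) := hpeirce P hP P hP (A * B) hABmem
  have pB : e * φ B * e = φ B := hpeirce P hP P hP B hB
  -- Y
  set Y : 𝔄' := φ (A * B) - φ A * φ B with hY_def
  have hYe : Y * e = Y := by
    have h1 : φ (A * B) * e = φ (A * B) := absR hee pAB
    have h2 : φ B * e = φ B := absR hee pB
    rw [hY_def, sub_mul, h1, mul_assoc, h2]
  have hzero : ∀ Z : 𝔄', Y * Z * f = 0 := by
    intro Z
    obtain ⟨C, hC⟩ := hbij.2 (e * Z * f)
    -- decompose C and show φ (P*C*Q) = e * Z * f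
    have hdec : C = P * C * P + P * C * Q + Q * C * P + Q * C * Q := by
      calc C = (P + Q) * C * (P + Q) := by rw [hPQ1, one_mul, mul_one]
        _ = P * C * P + P * C * Q + Q * C * P + Q * C * Q := by noncomm_ring
    have hφdec : φ C = φ (P * C * P) + φ (P * C * Q) + φ (Q * C * P) + φ (Q * C * Q) := by
      conv_lhs => rw [hdec]
      rw [hadd, hadd, hadd]
    have p11 : e * φ (P * C * P) * e = φ (P * C * P) :=
      hpeirce P hP P hP _ (sand hPproj hPproj C)
    have p12 : e * φ (P * C * Q) * f = φ (P * C * Q) :=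
      hpeirce P hP Q hQmem _ (sand hPproj hQproj C)
    have p21 : f * φ (Q * C * P) * e = φ (Q * C * P) :=
      hpeirce Q hQmem P hP _ (sand hQproj hPproj C)
    have p22 : f * φ (Q * C * Q) * f = φ (Q * C * Q) :=
      hpeirce Q hQmem Q hQmem _ (sand hQproj hQproj C)
    have hee' : ∀ x : 𝔄', e * (e * x) = e * x := fun x => by rw [← mul_assoc, hee]
    have t11 : e * φ (P * C * P) * f = 0 := by
      conv_lhs => rw [← p11]
      simp [mul_assoc, hef0]
    have t12 : e * φ (P * C * Q) * f = φ (P * C * Q) := p12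
    have t21 : e * φ (Q * C * P) * f = 0 := by
      conv_lhs => rw [← p21]
      simp [mul_assoc, hef0, hee']
    have hef' : ∀ x : 𝔄', e * (f * x) = 0 := fun x => by rw [← mul_assoc, hef0, zero_mul]
    have t22 : e * φ (Q * C * Q) * f = 0 := by
      conv_lhs => rw [← p22]
      simp [mul_assoc, hef']
    have hW : φ (P * C * Q) = e * Z * f := by
      have h1 : e * φ C * f = φ (P * C * Q) := by
        rw [hφdec, mul_add, mul_add, mul_add, add_mul, add_mul, add_mul, t11, t12, t21, t22]
        abel
      rw [← h1, hC]
      rw [← mul_assoc, ← mul_assoc, hee, mul_assoc (e * Z), hff]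
    -- multiplicativity
    have hC'mem : P * (P * C * Q) * Q = P * C * Q := sand hPproj hQproj C
    have hm1 : φ (A * B * (P * C * Q)) = φ (A * B) * φ (P * C * Q) :=
      hmul1 P hP Q hQmem hPne (A * B) (P * C * Q) hABmem hC'mem
    have hBC'mem : P * (B * (P * C * Q)) * Q = B * (P * C * Q) :=
      mulmem hBl (absR hQproj hC'mem)
    have hm2 : φ (B * (P * C * Q)) = φ B * φ (P * C * Q) :=
      hmul1 P hP Q hQmem hPne B (P * C * Q) hB hC'mem
    have hm3 : φ (A * (B * (P * C * Q))) = φ A * φ (B * (P * C * Q)) :=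
      hmul1 P hP Q hQmem hPne A (B * (P * C * Q)) hA hBC'mem
    calc Y * Z * f = Y * (e * Z * f) := by
          conv_lhs => rw [← hYe]
          simp [mul_assoc]
      _ = Y * φ (P * C * Q) := by rw [hW]
      _ = φ (A * B) * φ (P * C * Q) - φ A * (φ B * φ (P * C * Q)) := by
          rw [hY_def, sub_mul, mul_assoc (φ A) (φ B)]
      _ = φ (A * B * (P * C * Q)) - φ (A * (B * (P * C * Q))) := by
          rw [← hm1, ← hm2, ← hm3]
      _ = 0 := by rw [mul_assoc, sub_self]
  have := hclub Q hQmem Y hzero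
  rw [hY_def] at this
  exact sub_eq_zero.mp this
end

section
/- Under the hypotheses of the main theorem, for A_{ij} ∈ 𝔄_{ij} and B_{ji} ∈ 𝔄_{ji} with i ≠ j, φ(A_{ij}B_{ji}) = φ(A_{ij})φ(B_{ji}). -/
lemma IsIdempotentElem.of_mul_mul_self {R : Type*} [Ring R] [IsAddTorsionFree R] {q : R}
    (hq : q * q * q = q) (hq' : (1 - q) * (1 - q) * (1 - q) = 1 - q) : IsIdempotentElem q := by
  have h : 3 • (q * q) = 3 • q :=
    calc 3 • (q * q) = (1 - q) * (1 - q) * (1 - q) - 1 + 3 • q + q * q * q := by noncomm_ring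
      _ = 3 • q := by rw [hq, hq']; abel
  exact nsmul_right_injective (by norm_num) h

section Peirce

variable {R : Type*} [Ring R] {p q A B : R}

lemma IsIdempotentElem.mul_eq_of_mul_mul_eq (hp : IsIdempotentElem p) (hA : p * A * q = A) :
    p * A = A := by
  rw [← hA, ← mul_assoc, ← mul_assoc, hp.eq]

lemma mul_eq_zero_of_mul_mul_eq (hqp : q * p = 0) (hA : p * A * q = A) : A * p = 0 := by
  rw [← hA, mul_assoc, hqp, mul_zero]

lemma mul_star_eq_zero_of_mul_mul_eq [StarRing R] (hp : IsSelfAdjoint p) (hq : IsSelfAdjoint q)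
    (hpq : p * q = 0) (hA : p * A * q = A) (hB : q * B * p = B) : B * star A = 0 := by
  have hA' : star A = q * star A * p :=
    calc star A = star (p * A * q) := by rw [hA]
      _ = q * star A * p := by rw [star_mul, star_mul, hp.star_eq, hq.star_eq, mul_assoc]
  rw [hA', ← hB, show q * B * p * (q * star A * p) = q * B * (p * q) * star A * p by noncomm_ring,
    hpq, mul_zero, zero_mul, zero_mul]

end Peirce

section JordanProduct

variable {R : Type*} [Ring R] [StarRing R] {p A B : R}

lemma IsStarProjection.foldl_jstar_replicate (hp : IsStarProjection p) (k : ℕ) :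
    (List.replicate k p).foldl jstar p = 2 ^ k • p := by
  induction k with
  | zero => simp
  | succ k ih =>
    rw [List.replicate_succ', List.foldl_append, ih, List.foldl_cons, List.foldl_nil, jstar,
      star_nsmul, hp.isSelfAdjoint.star_eq, smul_mul_assoc, mul_smul_comm, hp.isIdempotentElem.eq,
      ← two_nsmul, smul_smul, pow_succ, mul_comm]

/-- At `m = 0` the truncated exponent `m - 1` is `0`, matching `qstar [A, B] = A * B`. -/
lemma IsStarProjection.qstar_replicate_append (hp : IsStarProjection p)
    (hA : p * A * (1 - p) = A) (hB : (1 - p) * B * p = B) (m : ℕ) :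
    qstar (List.replicate m p ++ [A, B]) = 2 ^ (m - 1) • (A * B) := by
  have hpA : p * A = A := hp.isIdempotentElem.mul_eq_of_mul_mul_eq hA
  have hAp : A * p = 0 := mul_eq_zero_of_mul_mul_eq hp.isIdempotentElem.one_sub_mul_self hA
  have hBA : B * star A = 0 := mul_star_eq_zero_of_mul_mul_eq hp.isSelfAdjoint
    hp.one_sub.isSelfAdjoint hp.isIdempotentElem.mul_one_sub_self hA hB
  have hjA (k : ℕ) : jstar (2 ^ k • p) A = 2 ^ k • A := by
    rw [jstar, star_nsmul, hp.isSelfAdjoint.star_eq, smul_mul_assoc, mul_smul_comm, hpA, hAp,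
      smul_zero, add_zero]
  have hjB (k : ℕ) : jstar (2 ^ k • A) B = 2 ^ k • (A * B) := by
    rw [jstar, star_nsmul, smul_mul_assoc, mul_smul_comm, hBA, smul_zero, add_zero]
  cases m with
  | zero => simp [qstar, jstar, hBA]
  | succ k =>
    rw [List.replicate_succ, List.cons_append, qstar, List.foldl_append,
      hp.foldl_jstar_replicate, List.foldl_cons, List.foldl_cons, List.foldl_nil, hjA, hjB,
      Nat.add_sub_cancel]

end JordanProduct

theorem map_mul_of_map_qstar_eq {R S : Type*} [Ring R] [StarRing R] [Ring S] [StarRing S]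
    [IsAddTorsionFree S] (φ : R →+ S) (m : ℕ) {p A B : R}
    (hp : IsStarProjection p) (hφp : IsStarProjection (φ p))
    (hA : p * A * (1 - p) = A) (hB : (1 - p) * B * p = B)
    (hφA : φ p * φ A * (1 - φ p) = φ A) (hφB : (1 - φ p) * φ B * φ p = φ B)
    (hq : φ (qstar (List.replicate m p ++ [A, B])) =
      qstar (List.replicate m (φ p) ++ [φ A, φ B])) :
    φ (A * B) = φ A * φ B := by
  rw [hp.qstar_replicate_append hA hB, hφp.qstar_replicate_append hφA hφB, map_nsmul] at hq
  exact nsmul_right_injective (by positivity) hq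

theorem stmt15_general {𝔄 𝔄' : Type*} [CStarAlgebra 𝔄] [CStarAlgebra 𝔄']
    (n : ℕ)
    (P₁ : 𝔄) (hproj : P₁ * P₁ = P₁) (hsa : star P₁ = P₁)
    (φ : 𝔄 → 𝔄') (hunital : φ 1 = 1) (hadd : ∀ A B : 𝔄, φ (A + B) = φ A + φ B) (hstar : ∀ A : 𝔄, φ (star A) = star (φ A))
    (hpeirce : ∀ Pi ∈ ({P₁, 1 - P₁} : Set 𝔄), ∀ Pj ∈ ({P₁, 1 - P₁} : Set 𝔄), ∀ X : 𝔄,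
      Pi * X * Pj = X → φ Pi * φ X * φ Pj = φ X)
    (hqP : ∀ P ∈ ({P₁, 1 - P₁} : Set 𝔄), ∀ A B : 𝔄,
      φ (qstar (List.replicate (n - 2) P ++ [A, B])) =
      qstar (List.replicate (n - 2) (φ P) ++ [φ A, φ B])) :
    ∀ Pi ∈ ({P₁, 1 - P₁} : Set 𝔄), ∀ Pj ∈ ({P₁, 1 - P₁} : Set 𝔄), Pi ≠ Pj →
      ∀ A B : 𝔄, Pi * A * Pj = A → Pj * B * Pi = B →
      φ (A * B) = φ A * φ B := by
  have : IsAddTorsionFree 𝔄' := .of_isTorsionFree ℂ 𝔄'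
  have hφ_one_sub (X : 𝔄) : φ (1 - X) = 1 - φ X :=
    eq_sub_of_add_eq' (by rw [← hadd, add_sub_cancel, hunital])
  have hP₁ : IsStarProjection P₁ := ⟨hproj, hsa⟩
  have hmem : P₁ ∈ ({P₁, 1 - P₁} : Set 𝔄) := by simp
  have hmem' : 1 - P₁ ∈ ({P₁, 1 - P₁} : Set 𝔄) := by simp
  have hφP₁ : IsStarProjection (φ P₁) := by
    refine ⟨.of_mul_mul_self (hpeirce _ hmem _ hmem _ (by rw [hproj, hproj])) ?_, ?_⟩
    · rw [← hφ_one_sub]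
      exact hpeirce _ hmem' _ hmem' _ (by rw [hP₁.one_sub.isIdempotentElem.eq,
        hP₁.one_sub.isIdempotentElem.eq])
    · rw [IsSelfAdjoint, ← hstar, hsa]
  intro Pi hPi Pj hPj hne A B hA hB
  obtain ⟨rfl, hPi', hφPi⟩ : Pj = 1 - Pi ∧ IsStarProjection Pi ∧ IsStarProjection (φ Pi) := by
    simp only [Set.mem_insert_iff, Set.mem_singleton_iff] at hPi hPj
    rcases hPi with h | h <;> rcases hPj with h' | h' <;> rw [h, h'] at hne ⊢
    all_goals first
      | exact absurd rfl hne
      | exact ⟨rfl, hP₁, hφP₁⟩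
      | exact ⟨(sub_sub_cancel 1 P₁).symm, hP₁.one_sub, hφ_one_sub P₁ ▸ hφP₁.one_sub⟩
  refine map_mul_of_map_qstar_eq (.mk' φ hadd) (n - 2) hPi' hφPi hA hB ?_ ?_ (hqP Pi hPi A B)
  · simpa [hφ_one_sub] using hpeirce _ hPi _ hPj A hA
  · simpa [hφ_one_sub] using hpeirce _ hPj _ hPi B hB

theorem stmt15 {𝔄 𝔄' : Type*} [CStarAlgebra 𝔄] [CStarAlgebra 𝔄']
    (n : ℕ) (hn : 2 ≤ n)
    (P₁ : 𝔄) (hproj : P₁ * P₁ = P₁) (hsa : star P₁ = P₁) (hne0 : P₁ ≠ 0) (hne1 : P₁ ≠ 1)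
    (φ : 𝔄 → 𝔄') (hbij : Function.Bijective φ) (hunital : φ 1 = 1) (hadd : ∀ A B : 𝔄, φ (A + B) = φ A + φ B) (hstar : ∀ A : 𝔄, φ (star A) = star (φ A))
    (hpeirce : ∀ Pi ∈ ({P₁, 1 - P₁} : Set 𝔄), ∀ Pj ∈ ({P₁, 1 - P₁} : Set 𝔄), ∀ X : 𝔄,
      Pi * X * Pj = X → φ Pi * φ X * φ Pj = φ X)
    (hqI : ∀ A B : 𝔄, φ (qstar (List.replicate (n - 2) 1 ++ [A, B])) =
      qstar (List.replicate (n - 2) (φ 1) ++ [φ A, φ B]))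
    (hqP : ∀ P ∈ ({P₁, 1 - P₁} : Set 𝔄), ∀ A B : 𝔄,
      φ (qstar (List.replicate (n - 2) P ++ [A, B])) =
      qstar (List.replicate (n - 2) (φ P) ++ [φ A, φ B])) :
    ∀ Pi ∈ ({P₁, 1 - P₁} : Set 𝔄), ∀ Pj ∈ ({P₁, 1 - P₁} : Set 𝔄), Pi ≠ Pj →
      ∀ A B : 𝔄, Pi * A * Pj = A → Pj * B * Pi = B →
      φ (A * B) = φ A * φ B :=
  stmt15_general n P₁ hproj hsa φ hunital hadd hstar hpeirce hqP
end

section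
/- Main theorem: Let 𝔄, 𝔄' be unital C*-algebras with nontrivial projection P₁ ∈ 𝔄, P₂ = I − P₁, satisfying (♠) X𝔄P_i = {0} ⟹ X = 0 and (♣) Y𝔄'φ(P_i) = {0} ⟹ Y = 0. If φ : 𝔄 → 𝔄' is a bijective unital map satisfying φ(q_{n*}(I,...,I,A,B)) = q_{n*}(φ(I),...,φ(I),φ(A),φ(B)) and φ(q_{n*}(P,...,P,A,B)) = q_{n*}(φ(P),...,φ(P),φ(A),φ(B)) for all A,B ∈ 𝔄 and P ∈ {P₁,P₂}, then φ is a *-ring isomorphism: additive, multiplicative, and φ(A*) = φ(A)*. -/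
section JStar

variable {R : Type*} [Ring R] [StarRing R]

theorem jstar_add_left (a b x : R) : jstar (a + b) x = jstar a x + jstar b x := by
  simp only [jstar, add_mul, mul_add, star_add]; abel

theorem jstar_add_right (x a b : R) : jstar x (a + b) = jstar x a + jstar x b := by
  simp only [jstar, add_mul, mul_add]; abel

theorem jstar_nsmul_left_s16 (n : ℕ) (a b : R) : jstar (n • a) b = n • jstar a b := by
  rw [jstar, jstar, star_nsmul, smul_mul_assoc, mul_smul_comm, smul_add]

theorem jstar_nsmul_one_left (n : ℕ) (a : R) : jstar (n • 1) a = (2 * n) • a := by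
  rw [jstar, star_nsmul, star_one, smul_mul_assoc, one_mul, mul_smul_comm, mul_one, ← add_nsmul,
    two_mul]

theorem nsmul_jstar_sum_left (n : ℕ) (x : R) (l : List R) :
    n • jstar l.sum x = (l.map fun y => n • jstar y x).sum := by
  induction l with
  | nil => simp [jstar]
  | cons y l ih => rw [List.sum_cons, jstar_add_left, smul_add, ih, List.map_cons, List.sum_cons]

theorem nsmul_jstar_sum_right (n : ℕ) (x : R) (l : List R) :
    n • jstar x l.sum = (l.map fun y => n • jstar x y).sum := by
  induction l with
  | nil => simp [jstar]
  | cons y l ih => rw [List.sum_cons, jstar_add_right, smul_add, ih, List.map_cons, List.sum_cons]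

theorem qstar_replicate_one_append (k : ℕ) (a b : R) :
    qstar (List.replicate k 1 ++ [a, b]) = 2 ^ k • jstar a b := by
  have h (j : ℕ) : (List.replicate j (1 : R)).foldl jstar 1 = 2 ^ j • 1 := by
    induction j with
    | zero => simp
    | succ j ih =>
      rw [List.replicate_succ', List.foldl_append, ih, List.foldl_cons, List.foldl_nil,
        jstar_nsmul_one_left, pow_succ']
  cases k with
  | zero => simp [qstar]
  | succ k =>
    rw [List.replicate_succ, List.cons_append, qstar, List.foldl_append, h, List.foldl_cons,
      List.foldl_cons, List.foldl_nil, jstar_nsmul_one_left, jstar_nsmul_left_s16, pow_succ']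

end JStar

theorem IsAddTorsionFree.add_self_eq_zero {M : Type*} [AddMonoid M] [IsAddTorsionFree M]
    {a : M} : a + a = 0 ↔ a = 0 := by
  rw [← two_nsmul, ← nsmul_zero 2, nsmul_right_inj two_ne_zero, nsmul_zero]

theorem IsAddTorsionFree.add_self_inj {M : Type*} [AddMonoid M] [IsAddTorsionFree M]
    {a b : M} : a + a = b + b ↔ a = b := by
  rw [← two_nsmul, ← two_nsmul, nsmul_right_inj two_ne_zero]

structure IsComplStarProj {R : Type*} [Ring R] [StarRing R] (p q : R) : Prop where
  isStarProjection : IsStarProjection p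
  add_eq_one : p + q = 1

namespace IsComplStarProj

variable {R : Type*} [Ring R] [StarRing R] {p q : R}

theorem eq_one_sub (P : IsComplStarProj p q) : q = 1 - p :=
  eq_sub_of_add_eq' P.add_eq_one

theorem symm (P : IsComplStarProj p q) : IsComplStarProj q p :=
  ⟨P.eq_one_sub ▸ P.isStarProjection.one_sub, by rw [add_comm, P.add_eq_one]⟩

theorem mul_eq_zero (P : IsComplStarProj p q) : p * q = 0 := by
  rw [P.eq_one_sub, mul_sub, mul_one, P.isStarProjection.isIdempotentElem.eq, sub_self]

/-- The multiplication table of `p` and `q`, as one conjunction so that `simp [P.rules, mul_assoc]`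
brings any word in `p`, `q` and other elements to a normal form. -/
theorem rules (P : IsComplStarProj p q) :
    p * p = p ∧ q * q = q ∧ p * q = 0 ∧ q * p = 0 ∧ star p = p ∧ star q = q ∧
      ∀ x : R, p * (p * x) = p * x ∧ q * (q * x) = q * x ∧ p * (q * x) = 0 ∧ q * (p * x) = 0 := by
  have hp := P.isStarProjection
  have hq := P.symm.isStarProjection
  have hpp := hp.isIdempotentElem.eq
  have hqq := hq.isIdempotentElem.eq
  have hpq := P.mul_eq_zero
  have hqp := P.symm.mul_eq_zero
  refine ⟨hpp, hqq, hpq, hqp, hp.isSelfAdjoint.star_eq, hq.isSelfAdjoint.star_eq, fun x => ?_⟩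
  simp only [← mul_assoc, hpp, hqq, hpq, hqp, zero_mul, and_self]

theorem decomp (P : IsComplStarProj p q) (x : R) :
    x = p * x * p + p * x * q + q * x * p + q * x * q :=
  calc x = (p + q) * x * (p + q) := by rw [P.add_eq_one, one_mul, mul_one]
    _ = _ := by noncomm_ring

theorem ext (P : IsComplStarProj p q) {x y : R} (h₁ : p * x * p = p * y * p)
    (h₂ : p * x * q = p * y * q) (h₃ : q * x * p = q * y * p) (h₄ : q * x * q = q * y * q) :
    x = y := by
  rw [P.decomp x, P.decomp y, h₁, h₂, h₃, h₄]

theorem corner_eq_of_jstar_left_eq (P : IsComplStarProj p q) {x y : R}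
    (h : jstar x q = jstar y q) : p * x * q = p * y * q := by
  simpa [jstar, P.rules, mul_assoc, mul_add, add_mul] using congrArg (p * · * q) h

theorem corners_eq_zero_of_jstar_eq (P : IsComplStarProj p q) [IsAddTorsionFree R] {x : R}
    (h : jstar p x = jstar q x) : p * x * p = 0 ∧ q * x * q = 0 := by
  have h₁ := congrArg (p * · * p) h
  have h₂ := congrArg (q * · * q) h.symm
  simp only [jstar, P.rules, mul_add, add_mul, mul_assoc, zero_add, mul_zero,
      IsAddTorsionFree.add_self_eq_zero] at h₁ h₂
  simp [mul_assoc, h₁, h₂]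

theorem corners_eq_of_jstar_eq (P : IsComplStarProj p q) [IsAddTorsionFree R] {x y : R}
    (h : jstar q x = jstar q y) :
    p * x * q = p * y * q ∧ q * x * p = q * y * p ∧ q * x * q = q * y * q := by
  have h₁ := congrArg (p * · * q) h
  have h₂ := congrArg (q * · * p) h
  have h₃ := congrArg (q * · * q) h
  simp only [jstar, P.rules, mul_add, zero_add, mul_assoc, add_mul, mul_zero, add_zero,
      IsAddTorsionFree.add_self_inj] at h₁ h₂ h₃
  simp [mul_assoc, h₁, h₂, h₃]

theorem eq_of_jstar_eq (P : IsComplStarProj p q) [IsAddTorsionFree R] {x y : R}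
    (hp : jstar p x = jstar p y) (hq : jstar q x = jstar q y) : x = y := by
  obtain ⟨h₂, h₃, h₄⟩ := P.corners_eq_of_jstar_eq hq
  obtain ⟨-, -, h₁⟩ := P.symm.corners_eq_of_jstar_eq hp
  exact P.ext h₁ h₂ h₃ h₄

end IsComplStarProj

/-- Condition (♠)/(♣) of the paper: `X 𝔄 P = {0}` forces `X = 0`. -/
def IsSeparating {R : Type*} [Ring R] (P : R) : Prop :=
  ∀ X : R, (∀ A : R, X * A * P = 0) → X = 0

theorem IsSeparating.eq {R : Type*} [Ring R] {P x y : R} (h : IsSeparating P)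
    (hxy : ∀ A, x * A * P = y * A * P) : x = y :=
  sub_eq_zero.1 <| h _ fun A => by rw [sub_mul, sub_mul, hxy, sub_self]

/-- For `k = n - 2` this is the hypothesis on `q_{n*}(I, …, I, A, B) = 2 ^ k • {A, B}_*`. -/
def PreservesScaledJStar {R S : Type*} [Ring R] [StarRing R] [Ring S] [StarRing S]
    (k : ℕ) (φ : R → S) : Prop :=
  ∀ a b : R, φ (2 ^ k • jstar a b) = 2 ^ k • jstar (φ a) (φ b)

namespace PreservesScaledJStar

variable {R S : Type*} [Ring R] [StarRing R] [Ring S] [StarRing S] {k : ℕ} {φ : R ≃ S}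

theorem map_zero (hJ : PreservesScaledJStar k φ) : φ 0 = 0 := by
  simpa [jstar] using hJ 0 (φ.symm 0)

theorem map_nsmul_jstar_left (hJ : PreservesScaledJStar k φ) {T : R} {l : List R}
    (hT : φ T = (l.map φ).sum) (X : R) :
    φ (2 ^ k • jstar T X) = ((l.map fun x => 2 ^ k • jstar x X).map φ).sum := by
  rw [hJ, hT, nsmul_jstar_sum_left, List.map_map, List.map_map]
  exact congrArg List.sum (List.map_congr_left fun x _ => (hJ x X).symm)

theorem map_nsmul_jstar_right (hJ : PreservesScaledJStar k φ) {T : R} {l : List R}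
    (hT : φ T = (l.map φ).sum) (X : R) :
    φ (2 ^ k • jstar X T) = ((l.map fun x => 2 ^ k • jstar X x).map φ).sum := by
  rw [hJ, hT, nsmul_jstar_sum_right, List.map_map, List.map_map]
  exact congrArg List.sum (List.map_congr_left fun x _ => (hJ X x).symm)

variable [IsAddTorsionFree R]

theorem jstar_left_eq_jstar_sum (hJ : PreservesScaledJStar k φ) {T : R} {l : List R}
    (hT : φ T = (l.map φ).sum) {X : R}
    (hX : φ (l.map fun x => 2 ^ k • jstar x X).sum =
      ((l.map fun x => 2 ^ k • jstar x X).map φ).sum) :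
    jstar T X = jstar l.sum X := by
  refine (nsmul_right_inj (pow_ne_zero k two_ne_zero)).1 (φ.injective ?_)
  rw [map_nsmul_jstar_left hJ hT, nsmul_jstar_sum_left, hX]

theorem jstar_right_eq_jstar_sum (hJ : PreservesScaledJStar k φ) {T : R} {l : List R}
    (hT : φ T = (l.map φ).sum) {X : R}
    (hX : φ (l.map fun x => 2 ^ k • jstar X x).sum =
      ((l.map fun x => 2 ^ k • jstar X x).map φ).sum) :
    jstar X T = jstar X l.sum := by
  refine (nsmul_right_inj (pow_ne_zero k two_ne_zero)).1 (φ.injective ?_)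
  rw [map_nsmul_jstar_right hJ hT, nsmul_jstar_sum_right, hX]

theorem jstar_eq_jstar_of_forall_mem (hJ : PreservesScaledJStar k φ) {T : R} {l : List R}
    (hT : φ T = (l.map φ).sum) {X Y : R} (hXY : ∀ x ∈ l, jstar X x = jstar Y x) :
    jstar X T = jstar Y T := by
  refine (nsmul_right_inj (pow_ne_zero k two_ne_zero)).1 (φ.injective ?_)
  rw [map_nsmul_jstar_right hJ hT, map_nsmul_jstar_right hJ hT, List.map_map, List.map_map]
  exact congrArg List.sum <| List.map_congr_left fun x hx => by
    simp only [Function.comp_apply, hXY x hx]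

section Peirce

variable {p q : R}

attribute [-simp] nsmul_eq_mul
attribute [local simp] jstar mul_assoc mul_add add_mul mul_smul_comm smul_mul_assoc star_nsmul

theorem map_add_pq_qp (hJ : PreservesScaledJStar k φ) (P : IsComplStarProj p q) {x y : R}
    (hx : p * x * q = x) (hy : q * y * p = y) : φ (x + y) = φ x + φ y := by
  obtain ⟨a, rfl⟩ : ∃ a, x = p * a * q := ⟨x, hx.symm⟩
  obtain ⟨b, rfl⟩ : ∃ b, y = q * b * p := ⟨y, hy.symm⟩
  obtain ⟨T, hT⟩ := φ.surjective ([p * a * q, q * b * p].map φ).sum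
  have h₂ := P.corner_eq_of_jstar_left_eq <|
    hJ.jstar_left_eq_jstar_sum hT (X := q) (by simp [P.rules, hJ.map_zero])
  have h₃ := P.symm.corner_eq_of_jstar_left_eq <|
    hJ.jstar_left_eq_jstar_sum hT (X := p) (by simp [P.rules, hJ.map_zero])
  obtain ⟨h₁, h₄⟩ := P.corners_eq_zero_of_jstar_eq <|
    hJ.jstar_eq_jstar_of_forall_mem hT (by simp [P.rules])
  simp only [mul_assoc, List.sum_cons, List.sum_nil, add_zero, mul_add, P.rules,
      zero_add] at h₁ h₂ h₃ h₄
  have hT_eq : T = p * a * q + q * b * p := by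
    refine P.ext ?_ ?_ ?_ ?_ <;> simp [P.rules, h₁, h₂, h₃, h₄]
  simpa [hT_eq] using hT

theorem map_add_pp_pq (hJ : PreservesScaledJStar k φ) (P : IsComplStarProj p q)
    (hsq : IsSeparating q) {x y : R} (hx : p * x * p = x) (hy : p * y * q = y) :
    φ (x + y) = φ x + φ y := by
  obtain ⟨a, rfl⟩ : ∃ a, x = p * a * p := ⟨x, hx.symm⟩
  obtain ⟨b, rfl⟩ : ∃ b, y = p * b * q := ⟨y, hy.symm⟩
  obtain ⟨T, hT⟩ := φ.surjective ([p * a * p, p * b * q].map φ).sum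
  obtain ⟨h₂, h₃, h₄⟩ := P.corners_eq_of_jstar_eq <|
    hJ.jstar_right_eq_jstar_sum hT (X := q) (by simp [P.rules, hJ.map_zero])
  simp only [mul_assoc, List.sum_cons, List.sum_nil, add_zero, mul_add, P.rules, add_mul,
      mul_zero, zero_add, zero_mul] at h₂ h₃ h₄
  have hT_eq : T = p * T * p + p * b * q := by
    refine P.ext ?_ ?_ ?_ ?_ <;> simp [P.rules, h₂, h₃, h₄]
  suffices p * T * p = p * a * p by rw [hT_eq, this] at hT; simpa using hT
  refine hsq.eq fun Z => ?_
  -- `2 ^ k • {T, p Z q}_*` has `(p, q)`-corner `2 ^ k • p T p Z q` and is sent by `φ` to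
  -- `φ (2 ^ k • x p Z q) + φ (2 ^ k • p Z q y*)`.
  have h := hJ.jstar_right_eq_jstar_sum (hJ.map_nsmul_jstar_left hT (p * Z * q)) (X := q)
    (by simp [P.rules, hJ.map_zero])
  rw [hT_eq] at h
  simpa [P.rules] using h

theorem map_add_pp_qp (hJ : PreservesScaledJStar k φ) (P : IsComplStarProj p q)
    (hsq : IsSeparating q) {x y : R} (hx : p * x * p = x) (hy : q * y * p = y) :
    φ (x + y) = φ x + φ y := by
  obtain ⟨a, rfl⟩ : ∃ a, x = p * a * p := ⟨x, hx.symm⟩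
  obtain ⟨b, rfl⟩ : ∃ b, y = q * b * p := ⟨y, hy.symm⟩
  obtain ⟨T, hT⟩ := φ.surjective ([p * a * p, q * b * p].map φ).sum
  obtain ⟨h₂, h₃, h₄⟩ := P.corners_eq_of_jstar_eq <|
    hJ.jstar_right_eq_jstar_sum hT (X := q) (by simp [P.rules, hJ.map_zero])
  simp only [mul_assoc, List.sum_cons, List.sum_nil, add_zero, mul_add, P.rules, mul_zero,
      zero_add] at h₂ h₃ h₄
  have hT_eq : T = p * T * p + q * b * p := by
    refine P.ext ?_ ?_ ?_ ?_ <;> simp [P.rules, h₂, h₃, h₄]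
  suffices p * T * p = p * a * p by rw [hT_eq, this] at hT; simpa using hT
  refine hsq.eq fun Z => ?_
  have h := hJ.jstar_right_eq_jstar_sum (hJ.map_nsmul_jstar_left hT (p * Z * q)) (X := p)
    (by simp [P.rules, hJ.map_zero])
  rw [hT_eq] at h
  simpa [P.rules] using h

theorem map_add_pp_qq_pq (hJ : PreservesScaledJStar k φ) (P : IsComplStarProj p q)
    (hsp : IsSeparating p) (hsq : IsSeparating q) {x y z : R} (hx : p * x * p = x)
    (hy : q * y * q = y) (hz : p * z * q = z) : φ (x + y + z) = φ x + φ y + φ z := by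
  obtain ⟨a, rfl⟩ : ∃ a, x = p * a * p := ⟨x, hx.symm⟩
  obtain ⟨b, rfl⟩ : ∃ b, y = q * b * q := ⟨y, hy.symm⟩
  obtain ⟨c, rfl⟩ : ∃ c, z = p * c * q := ⟨z, hz.symm⟩
  obtain ⟨T, hT⟩ := φ.surjective ([p * a * p, q * b * q, p * c * q].map φ).sum
  have h₁ := hJ.jstar_right_eq_jstar_sum hT (X := p) (by
    simpa [P.rules, hJ.map_zero] using map_add_pp_pq hJ P hsq
      (x := 2 ^ k • (p * a * p) + 2 ^ k • (p * a * p)) (y := 2 ^ k • (p * c * q))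
      (by simp [P.rules]) (by simp [P.rules]))
  have h₂ := hJ.jstar_right_eq_jstar_sum hT (X := q) (by
    simpa [P.rules, hJ.map_zero] using map_add_pp_qp hJ P.symm hsp
      (x := 2 ^ k • (q * b * q) + 2 ^ k • (q * b * q)) (y := 2 ^ k • (p * c * q))
      (by simp [P.rules]) (by simp [P.rules]))
  simpa [P.eq_of_jstar_eq h₁ h₂, add_assoc] using hT

theorem map_add_pp_pq_qp (hJ : PreservesScaledJStar k φ) (P : IsComplStarProj p q)
    (hsp : IsSeparating p) (hsq : IsSeparating q) {x y z : R} (hx : p * x * p = x)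
    (hy : p * y * q = y) (hz : q * z * p = z) : φ (x + y + z) = φ x + φ y + φ z := by
  obtain ⟨a, rfl⟩ : ∃ a, x = p * a * p := ⟨x, hx.symm⟩
  obtain ⟨b, rfl⟩ : ∃ b, y = p * b * q := ⟨y, hy.symm⟩
  obtain ⟨c, rfl⟩ : ∃ c, z = q * c * p := ⟨z, hz.symm⟩
  obtain ⟨T, hT⟩ := φ.surjective ([p * a * p, p * b * q, q * c * p].map φ).sum
  obtain ⟨h₂, h₃, h₄⟩ := P.corners_eq_of_jstar_eq <| hJ.jstar_right_eq_jstar_sum hT (X := q) (by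
    simpa [P.rules, hJ.map_zero] using map_add_pq_qp hJ P
      (x := 2 ^ k • (p * b * q)) (y := 2 ^ k • (q * c * p)) (by simp [P.rules]) (by simp [P.rules]))
  simp only [mul_assoc, List.sum_cons, List.sum_nil, add_zero, mul_add, P.rules, add_mul,
      mul_zero, zero_add] at h₂ h₃ h₄
  have hT_eq : T = p * T * p + p * b * q + q * c * p := by
    refine P.ext ?_ ?_ ?_ ?_ <;> simp [P.rules, h₂, h₃, h₄]
  suffices p * T * p = p * a * p by rw [hT_eq, this] at hT; simpa [add_assoc] using hT
  refine hsq.eq fun Z => ?_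
  have h := hJ.jstar_left_eq_jstar_sum hT (X := p * Z * q) (by
    have := map_add_pp_qq_pq hJ P hsp hsq (x := 2 ^ k • (p * Z * q * star (p * b * q)))
      (y := 2 ^ k • (q * c * p * (p * Z * q))) (z := 2 ^ k • (p * a * p * (p * Z * q)))
      (by simp [P.rules]) (by simp [P.rules]) (by simp [P.rules])
    simp only [mul_assoc, star_mul, P.rules, jstar, smul_add, List.map_cons, mul_zero, nsmul_zero,
        add_zero, zero_add, List.map_nil, List.sum_cons, List.sum_nil] at this ⊢
    abel_nf at this ⊢
    exact this)
  rw [hT_eq] at h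
  simpa [P.rules] using h

theorem map_add_corners (hJ : PreservesScaledJStar k φ) (P : IsComplStarProj p q)
    (hsp : IsSeparating p) (hsq : IsSeparating q) {x y z w : R} (hx : p * x * p = x)
    (hy : p * y * q = y) (hz : q * z * p = z) (hw : q * w * q = w) :
    φ (x + y + z + w) = φ x + φ y + φ z + φ w := by
  obtain ⟨a, rfl⟩ : ∃ a, x = p * a * p := ⟨x, hx.symm⟩
  obtain ⟨b, rfl⟩ : ∃ b, y = p * b * q := ⟨y, hy.symm⟩
  obtain ⟨c, rfl⟩ : ∃ c, z = q * c * p := ⟨z, hz.symm⟩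
  obtain ⟨d, rfl⟩ : ∃ d, w = q * d * q := ⟨w, hw.symm⟩
  obtain ⟨T, hT⟩ := φ.surjective ([p * a * p, p * b * q, q * c * p, q * d * q].map φ).sum
  have h₁ := hJ.jstar_right_eq_jstar_sum hT (X := p) (by
    have := map_add_pp_pq_qp hJ P hsp hsq (x := 2 ^ k • (p * a * p) + 2 ^ k • (p * a * p))
      (y := 2 ^ k • (p * b * q)) (z := 2 ^ k • (q * c * p))
      (by simp [P.rules]) (by simp [P.rules]) (by simp [P.rules])
    simp only [mul_assoc, jstar, P.rules, smul_add, List.map_cons, mul_zero, nsmul_zero, add_zero,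
        zero_add, List.map_nil, List.sum_cons, List.sum_nil, hJ.map_zero] at this ⊢
    abel_nf at this ⊢
    exact this)
  have h₂ := hJ.jstar_right_eq_jstar_sum hT (X := q) (by
    have := map_add_pp_pq_qp hJ P.symm hsq hsp (x := 2 ^ k • (q * d * q) + 2 ^ k • (q * d * q))
      (y := 2 ^ k • (q * c * p)) (z := 2 ^ k • (p * b * q))
      (by simp [P.rules]) (by simp [P.rules]) (by simp [P.rules])
    simp only [mul_assoc, jstar, P.rules, smul_add, List.map_cons, nsmul_zero, mul_zero, add_zero,
        zero_add, List.map_nil, List.sum_cons, List.sum_nil, hJ.map_zero] at this ⊢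
    abel_nf at this ⊢
    exact this)
  simpa [P.eq_of_jstar_eq h₁ h₂, add_assoc] using hT

theorem map_nsmul_add_pq_pq (hJ : PreservesScaledJStar k φ) (P : IsComplStarProj p q)
    (hsp : IsSeparating p) (hsq : IsSeparating q) {x y : R} (hx : p * x * q = x)
    (hy : p * y * q = y) : φ (2 ^ k • x + 2 ^ k • y) = φ (2 ^ k • x) + φ (2 ^ k • y) := by
  obtain ⟨a, rfl⟩ : ∃ a, x = p * a * q := ⟨x, hx.symm⟩
  obtain ⟨b, rfl⟩ : ∃ b, y = p * b * q := ⟨y, hy.symm⟩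
  have hpa : φ (p + p * a * q) = φ p + φ (p * a * q) :=
    map_add_pp_pq hJ P hsq (by simp [P.rules]) (by simp [P.rules])
  have hqb : φ (q + p * b * q) = φ q + φ (p * b * q) :=
    map_add_pp_qp hJ P.symm hsp (by simp [P.rules]) (by simp [P.rules])
  -- `{p + x, q + y}_* = y x* + (x + y) + x*`: expand `φ` of it by biadditivity (`h`) and by
  -- corners (`hE`), then cancel.
  have h : φ (2 ^ k • jstar (p + p * a * q) (q + p * b * q)) =
      φ (2 ^ k • jstar p q) + φ (2 ^ k • jstar p (p * b * q)) +
        (φ (2 ^ k • jstar (p * a * q) q) + φ (2 ^ k • jstar (p * a * q) (p * b * q))) := by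
    rw [hJ, hpa, hqb, jstar_add_left, jstar_add_right, jstar_add_right, smul_add, smul_add,
      smul_add, hJ, hJ, hJ, hJ]
  have hE := map_add_corners hJ P hsp hsq (x := 2 ^ k • (p * b * q * star (p * a * q)))
    (y := 2 ^ k • (p * a * q) + 2 ^ k • (p * b * q)) (z := 2 ^ k • star (p * a * q)) (w := 0)
    (by simp [P.rules]) (by simp [P.rules]) (by simp [P.rules]) (by simp)
  have hA := map_add_pq_qp hJ P (x := 2 ^ k • (p * a * q)) (y := 2 ^ k • star (p * a * q))
    (by simp [P.rules]) (by simp [P.rules])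
  simp only [jstar, mul_assoc, mul_add, add_mul, P.rules, zero_add, mul_zero, add_zero, star_add,
      star_mul, smul_add, nsmul_zero, hJ.map_zero] at h hE hA ⊢
  rw [hA] at h
  abel_nf at h hE ⊢
  rw [hE, ← sub_eq_zero] at h
  rw [← sub_eq_zero]
  abel_nf at h ⊢
  exact h

theorem map_add_pp_pp (hJ : PreservesScaledJStar k φ) (P : IsComplStarProj p q)
    (hsp : IsSeparating p) (hsq : IsSeparating q) {x y : R} (hx : p * x * p = x)
    (hy : p * y * p = y) : φ (x + y) = φ x + φ y := by
  obtain ⟨a, rfl⟩ : ∃ a, x = p * a * p := ⟨x, hx.symm⟩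
  obtain ⟨b, rfl⟩ : ∃ b, y = p * b * p := ⟨y, hy.symm⟩
  obtain ⟨T, hT⟩ := φ.surjective ([p * a * p, p * b * p].map φ).sum
  obtain ⟨h₂, h₃, h₄⟩ := P.corners_eq_of_jstar_eq <|
    hJ.jstar_right_eq_jstar_sum hT (X := q) (by simp [P.rules, hJ.map_zero])
  simp only [mul_assoc, List.sum_cons, List.sum_nil, add_zero, mul_add, P.rules, add_mul,
      mul_zero, zero_mul] at h₂ h₃ h₄
  have hT_eq : T = p * T * p := by
    refine P.ext ?_ ?_ ?_ ?_ <;> simp [P.rules, h₂, h₃, h₄]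
  suffices p * T * p = p * a * p + p * b * p by rw [hT_eq, this] at hT; simpa using hT
  refine hsq.eq fun Z => ?_
  have h := hJ.jstar_left_eq_jstar_sum hT (X := p * Z * q) (by
    simpa [P.rules, hJ.map_zero] using map_nsmul_add_pq_pq hJ P hsp hsq
      (x := p * a * p * (p * Z * q)) (y := p * b * p * (p * Z * q))
      (by simp [P.rules]) (by simp [P.rules]))
  rw [hT_eq] at h
  simpa [P.rules] using h

theorem map_add_pq_pq (hJ : PreservesScaledJStar k φ) (P : IsComplStarProj p q)
    (hsp : IsSeparating p) (hsq : IsSeparating q) {x y : R} (hx : p * x * q = x)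
    (hy : p * y * q = y) : φ (x + y) = φ x + φ y := by
  obtain ⟨a, rfl⟩ : ∃ a, x = p * a * q := ⟨x, hx.symm⟩
  obtain ⟨b, rfl⟩ : ∃ b, y = p * b * q := ⟨y, hy.symm⟩
  obtain ⟨T, hT⟩ := φ.surjective ([p * a * q, p * b * q].map φ).sum
  have h₃ := P.symm.corner_eq_of_jstar_left_eq <|
    hJ.jstar_left_eq_jstar_sum hT (X := p) (by simp [P.rules, hJ.map_zero])
  obtain ⟨h₁, h₄⟩ := P.corners_eq_zero_of_jstar_eq <|
    hJ.jstar_eq_jstar_of_forall_mem hT (by simp [P.rules])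
  simp only [mul_assoc, List.sum_cons, List.sum_nil, add_zero, mul_add, P.rules,
      zero_mul] at h₁ h₃ h₄
  have hT_eq : T = p * T * q := by
    refine P.ext ?_ ?_ ?_ ?_ <;> simp [P.rules, h₁, h₃, h₄]
  suffices p * T * q = p * a * q + p * b * q by rw [hT_eq, this] at hT; simpa using hT
  refine hsp.eq fun Z => ?_
  have h := hJ.jstar_left_eq_jstar_sum hT (X := q * Z * p) (by
    simpa [P.rules, hJ.map_zero] using map_add_pp_pp hJ P hsp hsq
      (x := 2 ^ k • (p * a * q * (q * Z * p))) (y := 2 ^ k • (p * b * q * (q * Z * p)))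
      (by simp [P.rules]) (by simp [P.rules]))
  rw [hT_eq] at h
  simpa [P.rules] using h

theorem map_eq_sum_corners (hJ : PreservesScaledJStar k φ) (P : IsComplStarProj p q)
    (hsp : IsSeparating p) (hsq : IsSeparating q) (x : R) :
    φ x = φ (p * x * p) + φ (p * x * q) + φ (q * x * p) + φ (q * x * q) := by
  conv_lhs => rw [P.decomp x]
  exact map_add_corners hJ P hsp hsq (by simp [P.rules]) (by simp [P.rules]) (by simp [P.rules])
    (by simp [P.rules])

theorem map_add (hJ : PreservesScaledJStar k φ) (P : IsComplStarProj p q)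
    (hsp : IsSeparating p) (hsq : IsSeparating q) (x y : R) : φ (x + y) = φ x + φ y := by
  rw [map_eq_sum_corners hJ P hsp hsq (x + y), map_eq_sum_corners hJ P hsp hsq x,
    map_eq_sum_corners hJ P hsp hsq y]
  simp only [mul_add, add_mul]
  rw [map_add_pp_pp hJ P hsp hsq (by simp [P.rules]) (by simp [P.rules]),
    map_add_pq_pq hJ P hsp hsq (by simp [P.rules]) (by simp [P.rules]),
    map_add_pq_pq hJ P.symm hsq hsp (by simp [P.rules]) (by simp [P.rules]),
    map_add_pp_pp hJ P.symm hsq hsp (by simp [P.rules]) (by simp [P.rules])]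
  abel

end Peirce

end PreservesScaledJStar

def PreservesJStar {R S : Type*} [Ring R] [StarRing R] [Ring S] [StarRing S] (f : R → S) : Prop :=
  ∀ a b : R, f (jstar a b) = jstar (f a) (f b)

namespace PreservesJStar

variable {R S : Type*} [Ring R] [StarRing R] [Ring S] [StarRing S] {e : R ≃+ S} {p q : R}

theorem map_star (hJ : PreservesJStar e) (h1 : e 1 = 1) (a : R) : e (star a) = star (e a) := by
  have h := hJ a 1
  simp only [jstar, mul_one, one_mul, map_add, h1] at h
  exact add_left_cancel h

theorem isComplStarProj_map [IsAddTorsionFree S] (hJ : PreservesJStar e) (h1 : e 1 = 1)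
    (P : IsComplStarProj p q) : IsComplStarProj (e p) (e q) := by
  have hsa : star (e p) = e p := by rw [← hJ.map_star h1, P.rules.2.2.2.2.1]
  have h := hJ p p
  simp only [jstar, P.rules, map_add, hsa, IsAddTorsionFree.add_self_inj] at h
  exact ⟨⟨h.symm, hsa⟩, by rw [← map_add, P.add_eq_one, h1]⟩

section Peirce

attribute [local simp] jstar mul_assoc mul_add add_mul

theorem map_pq_corner (hJ : PreservesJStar e) (P : IsComplStarProj p q)
    (P' : IsComplStarProj (e p) (e q)) (a : R) : e (p * a * q) = e p * e (p * a * q) * e q := by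
  have h₁ := hJ p (p * a * q)
  have h₂ := hJ (p * a * q) p
  simp only [jstar, mul_assoc, P.rules, mul_zero, add_zero, P'.rules, star_mul, map_zero] at h₁ h₂
  have e₁ := congrArg (e p * · * e p) h₁
  have e₂ := congrArg (e q * · * e q) h₁
  have e₃ := congrArg (e q * · * e p) h₂.symm
  simp only [mul_assoc, mul_add, P'.rules, add_mul, left_eq_add, zero_add, mul_zero, add_zero,
      zero_mul] at e₁ e₂ e₃
  refine P'.ext ?_ ?_ ?_ ?_ <;> simp [P'.rules, e₁, e₂, e₃]

theorem map_pp_corner [IsAddTorsionFree S] (hJ : PreservesJStar e) (P : IsComplStarProj p q)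
    (P' : IsComplStarProj (e p) (e q)) (a : R) : e (p * a * p) = e p * e (p * a * p) * e p := by
  have h := hJ q (p * a * p)
  simp only [jstar, mul_assoc, P.rules, mul_zero, add_zero, map_zero, P'.rules] at h
  have e₁ := congrArg (e q * · * e q) h.symm
  have e₂ := congrArg (e q * · * e p) h.symm
  have e₃ := congrArg (e p * · * e q) h.symm
  simp only [mul_add, P'.rules, add_mul, mul_assoc, mul_zero, zero_mul,
      IsAddTorsionFree.add_self_eq_zero, add_zero, zero_add] at e₁ e₂ e₃
  refine P'.ext ?_ ?_ ?_ ?_ <;> simp [P'.rules, e₁, e₂, e₃]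

variable [IsAddTorsionFree S]

theorem map_mul_proj (hJ : PreservesJStar e) (P : IsComplStarProj p q)
    (P' : IsComplStarProj (e p) (e q)) (x : R) : e (x * p) = e x * e p := by
  have hx : x * p = p * x * p + q * x * p := by
    conv_lhs => rw [P.decomp x]
    simp [P.rules]
  calc e (x * p) = e (p * x * p) + e (q * x * p) := by rw [← map_add, ← hx]
    _ = e x * e p := by
      conv_rhs => rw [P.decomp x]
      rw [map_add, map_add, map_add, hJ.map_pp_corner P P' x, hJ.map_pq_corner P P' x,
        hJ.map_pq_corner P.symm P'.symm x, hJ.map_pp_corner P.symm P'.symm x]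
      simp [P'.rules]

theorem map_proj_mul (hJ : PreservesJStar e) (P : IsComplStarProj p q)
    (P' : IsComplStarProj (e p) (e q)) (x : R) : e (p * x) = e p * e x := by
  have hx : p * x = p * x * p + p * x * q := by
    conv_lhs => rw [P.decomp x]
    simp [P.rules]
  calc e (p * x) = e (p * x * p) + e (p * x * q) := by rw [← map_add, ← hx]
    _ = e p * e x := by
      conv_rhs => rw [P.decomp x]
      rw [map_add, map_add, map_add, hJ.map_pp_corner P P' x, hJ.map_pq_corner P P' x,
        hJ.map_pq_corner P.symm P'.symm x, hJ.map_pp_corner P.symm P'.symm x]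
      simp [P'.rules]

theorem map_mul_rules (hJ : PreservesJStar e) (P : IsComplStarProj p q)
    (P' : IsComplStarProj (e p) (e q)) : ∀ x : R,
    e (p * x) = e p * e x ∧ e (x * p) = e x * e p ∧ e (q * x) = e q * e x ∧ e (x * q) = e x * e q :=
  fun x => ⟨hJ.map_proj_mul P P' x, hJ.map_mul_proj P P' x, hJ.map_proj_mul P.symm P'.symm x,
    hJ.map_mul_proj P.symm P'.symm x⟩

theorem map_mul_pp_pq (hJ : PreservesJStar e) (P : IsComplStarProj p q)
    (P' : IsComplStarProj (e p) (e q)) {x y : R} (hx : p * x * p = x) (hy : p * y * q = y) :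
    e (x * y) = e x * e y := by
  obtain ⟨a, rfl⟩ : ∃ a, x = p * a * p := ⟨x, hx.symm⟩
  obtain ⟨b, rfl⟩ : ∃ b, y = p * b * q := ⟨y, hy.symm⟩
  calc e (p * a * p * (p * b * q)) = e (jstar (p * a * p) (p * b * q)) := by simp [P.rules]
    _ = jstar (e (p * a * p)) (e (p * b * q)) := hJ _ _
    _ = _ := by simp [hJ.map_mul_rules P P', P'.rules]

theorem map_mul_pq_qp (hJ : PreservesJStar e) (P : IsComplStarProj p q)
    (P' : IsComplStarProj (e p) (e q)) {x y : R} (hx : p * x * q = x) (hy : q * y * p = y) :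
    e (x * y) = e x * e y := by
  obtain ⟨a, rfl⟩ : ∃ a, x = p * a * q := ⟨x, hx.symm⟩
  obtain ⟨b, rfl⟩ : ∃ b, y = q * b * p := ⟨y, hy.symm⟩
  calc e (p * a * q * (q * b * p)) = e (jstar (p * a * q) (q * b * p)) := by simp [P.rules]
    _ = jstar (e (p * a * q)) (e (q * b * p)) := hJ _ _
    _ = _ := by simp [hJ.map_mul_rules P P', P'.rules]

theorem map_mul_pq_qq (hJ : PreservesJStar e) (h1 : e 1 = 1) (P : IsComplStarProj p q)
    (P' : IsComplStarProj (e p) (e q)) {x y : R} (hx : p * x * q = x) (hy : q * y * q = y) :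
    e (x * y) = e x * e y := by
  obtain ⟨a, rfl⟩ : ∃ a, x = p * a * q := ⟨x, hx.symm⟩
  obtain ⟨b, rfl⟩ : ∃ b, y = q * b * q := ⟨y, hy.symm⟩
  have h := hJ.map_mul_pp_pq P.symm P'.symm (x := star (q * b * q)) (y := star (p * a * q))
    (by simp [P.rules, star_mul]) (by simp [P.rules, star_mul])
  rw [← star_mul, hJ.map_star h1, hJ.map_star h1, hJ.map_star h1, ← star_mul] at h
  exact star_injective h

theorem map_mul_pp_pp (hJ : PreservesJStar e) (P : IsComplStarProj p q)
    (P' : IsComplStarProj (e p) (e q)) (hsep : IsSeparating (e q)) {x y : R}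
    (hx : p * x * p = x) (hy : p * y * p = y) : e (x * y) = e x * e y := by
  have hxy : p * (x * y) * p = x * y := by rw [← hx, ← hy]; simp [P.rules]
  have hxyp : e (x * y) * e p = e (x * y) := by
    rw [← hJ.map_mul_proj P P', ← hxy]; simp [P.rules]
  have hyp : e y * e p = e y := by rw [← hJ.map_mul_proj P P', ← hy]; simp [P.rules]
  refine hsep.eq fun Z => ?_
  -- `e p * Z * e q` is the image of the corner element `t`, and `x * y * t = x * (y * t)`.
  set t := p * e.symm Z * q
  have ht : e t = e p * Z * e q := by simp [t, hJ.map_mul_rules P P']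
  have hpt : p * t * q = t := by simp [t, P.rules]
  calc e (x * y) * Z * e q = e (x * y) * e p * Z * e q := by rw [hxyp]
    _ = e (x * y) * e t := by rw [ht]; simp only [mul_assoc]
    _ = e (x * (y * t)) := by rw [← hJ.map_mul_pp_pq P P' hxy hpt, mul_assoc]
    _ = e x * (e y * e t) := by
      rw [hJ.map_mul_pp_pq P P' hx (by rw [← hy]; simp [t, P.rules]), hJ.map_mul_pp_pq P P' hy hpt]
    _ = e x * e y * e p * Z * e q := by rw [ht]; simp only [mul_assoc]
    _ = e x * e y * Z * e q := by rw [mul_assoc (e x), hyp]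

theorem map_mul_proj_mul (hJ : PreservesJStar e) (h1 : e 1 = 1) (P : IsComplStarProj p q)
    (P' : IsComplStarProj (e p) (e q)) (hsep : IsSeparating (e q)) (x y : R) :
    e (x * p * y) = e x * e p * e y := by
  have hdec : x * p * y = p * x * p * (p * y * p) + p * x * p * (p * y * q) +
      q * x * p * (p * y * p) + q * x * p * (p * y * q) := by
    conv_lhs => rw [P.decomp x, P.decomp y]
    simp only [mul_assoc, add_mul, P.rules, mul_zero, add_zero, mul_add]
    abel
  rw [hdec, map_add, map_add, map_add,
    hJ.map_mul_pp_pp P P' hsep (x := p * x * p) (y := p * y * p) (by simp [P.rules])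
      (by simp [P.rules]),
    hJ.map_mul_pp_pq P P' (x := p * x * p) (y := p * y * q) (by simp [P.rules])
      (by simp [P.rules]),
    hJ.map_mul_pq_qq h1 P.symm P'.symm (x := q * x * p) (y := p * y * p) (by simp [P.rules])
      (by simp [P.rules]),
    hJ.map_mul_pq_qp P.symm P'.symm (x := q * x * p) (y := p * y * q) (by simp [P.rules])
      (by simp [P.rules])]
  conv_rhs => rw [← one_mul (e x), ← mul_one (e y), ← P'.add_eq_one]
  simp only [mul_assoc, hJ.map_mul_rules P P', P'.rules, add_mul, mul_add]
  abel

theorem map_mul (hJ : PreservesJStar e) (h1 : e 1 = 1) (P : IsComplStarProj p q)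
    (P' : IsComplStarProj (e p) (e q)) (hsp : IsSeparating (e p)) (hsq : IsSeparating (e q))
    (x y : R) : e (x * y) = e x * e y := by
  have hxy : x * y = x * p * y + x * q * y := by
    rw [mul_assoc, mul_assoc, ← mul_add, ← add_mul, P.add_eq_one, one_mul]
  rw [hxy, map_add, hJ.map_mul_proj_mul h1 P P' hsq, hJ.map_mul_proj_mul h1 P.symm P'.symm hsp,
    ← add_mul, ← mul_add, P'.add_eq_one, mul_one]

end Peirce

end PreservesJStar

theorem stmt16_general {𝔄 𝔄' : Type*} [CStarAlgebra 𝔄] [CStarAlgebra 𝔄']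
    (n : ℕ)
    (P₁ : 𝔄) (hproj : P₁ * P₁ = P₁) (hsa : star P₁ = P₁)
    (φ : 𝔄 → 𝔄') (hbij : Function.Bijective φ) (hunital : φ 1 = 1)
    (hqI : ∀ A B : 𝔄, φ (qstar (List.replicate (n - 2) 1 ++ [A, B])) =
      qstar (List.replicate (n - 2) (φ 1) ++ [φ A, φ B]))
    (hspade : ∀ P ∈ ({P₁, 1 - P₁} : Set 𝔄), ∀ X : 𝔄, (∀ A : 𝔄, X * A * P = 0) → X = 0)
    (hclub : ∀ P ∈ ({P₁, 1 - P₁} : Set 𝔄), ∀ Y : 𝔄', (∀ Z : 𝔄', Y * Z * φ P = 0) → Y = 0) :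
    (∀ A B : 𝔄, φ (A + B) = φ A + φ B) ∧
    (∀ A B : 𝔄, φ (A * B) = φ A * φ B) ∧
    (∀ A : 𝔄, φ (star A) = star (φ A)) := by
  have := IsAddTorsionFree.of_isTorsionFree ℂ 𝔄
  have := IsAddTorsionFree.of_isTorsionFree ℂ 𝔄'
  have P : IsComplStarProj P₁ (1 - P₁) := ⟨⟨hproj, hsa⟩, add_sub_cancel P₁ 1⟩
  have hJ : PreservesScaledJStar (n - 2) (Equiv.ofBijective φ hbij) := fun a b => by
    have h := hqI a b
    rwa [hunital, qstar_replicate_one_append, qstar_replicate_one_append] at h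
  have hadd := hJ.map_add P (hspade _ (by simp)) (hspade _ (by simp))
  let e : 𝔄 ≃+ 𝔄' := AddEquiv.mk' (Equiv.ofBijective φ hbij) hadd
  have hJe : PreservesJStar e := fun a b =>
    (nsmul_right_inj (pow_ne_zero (n - 2) two_ne_zero)).1 <| by rw [← map_nsmul]; exact hJ a b
  have P' := hJe.isComplStarProj_map hunital P
  exact ⟨hadd, hJe.map_mul hunital P P' (hclub _ (by simp)) (hclub _ (by simp)),
    hJe.map_star hunital⟩

theorem stmt16 {𝔄 𝔄' : Type*} [CStarAlgebra 𝔄] [CStarAlgebra 𝔄']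
    (n : ℕ) (hn : 2 ≤ n)
    (P₁ : 𝔄) (hproj : P₁ * P₁ = P₁) (hsa : star P₁ = P₁) (hne0 : P₁ ≠ 0) (hne1 : P₁ ≠ 1)
    (φ : 𝔄 → 𝔄') (hbij : Function.Bijective φ) (hunital : φ 1 = 1)
    (hqI : ∀ A B : 𝔄, φ (qstar (List.replicate (n - 2) 1 ++ [A, B])) =
      qstar (List.replicate (n - 2) (φ 1) ++ [φ A, φ B]))
    (hqP : ∀ P ∈ ({P₁, 1 - P₁} : Set 𝔄), ∀ A B : 𝔄,
      φ (qstar (List.replicate (n - 2) P ++ [A, B])) =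
      qstar (List.replicate (n - 2) (φ P) ++ [φ A, φ B]))
    (hspade : ∀ P ∈ ({P₁, 1 - P₁} : Set 𝔄), ∀ X : 𝔄, (∀ A : 𝔄, X * A * P = 0) → X = 0)
    (hclub : ∀ P ∈ ({P₁, 1 - P₁} : Set 𝔄), ∀ Y : 𝔄', (∀ Z : 𝔄', Y * Z * φ P = 0) → Y = 0) :
    (∀ A B : 𝔄, φ (A + B) = φ A + φ B) ∧
    (∀ A B : 𝔄, φ (A * B) = φ A * φ B) ∧
    (∀ A : 𝔄, φ (star A) = star (φ A)) :=
  stmt16_general n P₁ hproj hsa φ hbij hunital hqI hspade hclub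
end

section
/- In a unital *-ring, for a self-adjoint idempotent P and elements A ∈ P𝔄P, B ∈ P𝔄(1−P): q_{n*}(P,...,P,A,B) = 2^{n−2}AB, where q_{n*} is the iterated *-Jordan product and q_{n*}(P,...,P,A,B) has n−2 copies of P followed by A, B. -/
lemma foldP {R : Type*} [Ring R] [StarRing R]
    (P : R) (hproj : P * P = P) (hsa : star P = P) :
    ∀ (k m : ℕ), List.foldl jstar (m • P) (List.replicate k P) = (m * 2 ^ k) • P := by
  intro k
  induction k with
  | zero => intro m; simp
  | succ j ih =>
    intro m
    rw [List.replicate_succ, List.foldl_cons]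
    have h1 : jstar (m • P) P = (m * 2) • P := by
      rw [jstar, star_nsmul, hsa, smul_mul_assoc, mul_smul_comm, hproj,
        ← two_smul ℕ, smul_smul, mul_comm 2 m]
    rw [h1, ih]
    congr 1
    ring
theorem stmt19 {R : Type*} [Ring R] [StarRing R]
    (n : ℕ) (hn : 2 ≤ n)
    (P : R) (hproj : P * P = P) (hsa : star P = P)
    (A B : R) (hA : P * A * P = A) (hB : P * B * (1 - P) = B) :
    qstar (List.replicate (n - 2) P ++ [A, B]) = 2 ^ (n - 2) • (A * B) := by
  have hPA : P * A = A := by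
    conv_lhs => rw [← hA]
    rw [← mul_assoc, ← mul_assoc, hproj, hA]
  have hAP : A * P = A := by
    conv_lhs => rw [← hA]
    rw [mul_assoc, hproj, hA]
  have hBA : B * star A = 0 := by
    have hsA : star A = P * star A * P := by
      conv_lhs => rw [← hA]
      simp [star_mul, hsa, mul_assoc]
    have h0 : (1 - P) * P = 0 := by
      rw [sub_mul, one_mul, hproj, sub_self]
    have h1 : (1 - P) * (P * star A * P) = 0 := by
      rw [← mul_assoc, ← mul_assoc, h0, zero_mul, zero_mul]
    rw [hsA, ← hB, mul_assoc, h1, mul_zero]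
  set k := n - 2 with hk
  clear_value k
  cases k with
  | zero =>
    simp [qstar, jstar, hBA]
  | succ j =>
    rw [List.replicate_succ, List.cons_append]
    show List.foldl jstar P (List.replicate j P ++ [A, B]) = _
    rw [List.foldl_append]
    have hP1 : List.foldl jstar P (List.replicate j P) = (2 ^ j : ℕ) • P := by
      have := foldP P hproj hsa j 1
      simpa using this
    rw [hP1]
    have h2 : jstar ((2 ^ j : ℕ) • P) A = (2 ^ (j + 1) : ℕ) • A := by
      rw [jstar, star_nsmul, hsa, smul_mul_assoc, mul_smul_comm, hPA, hAP,
        ← two_smul ℕ, smul_smul, ← pow_succ']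
    simp only [List.foldl_cons, List.foldl_nil, h2]
    rw [jstar, star_nsmul, smul_mul_assoc, mul_smul_comm, hBA, smul_zero, add_zero]
end
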